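/- For all positive integers m and n, tₙ⋆(1_m) = (1/m) · ∑_{i=0}^{m-1} tₙ⋆(1_i)·tₙ(m-i), where tₙ⋆ is the multiple t-harmonic star sum and tₙ(k) = ∑_{j=1}^n 1/(2j-1)^k. -/

import Mathlib

open Finset

/-- Multiple t-harmonic star sum with `k` ones:
`tₙ⋆(1_k) = ∑_{n ≥ n₁ ≥ ⋯ ≥ n_k ≥ 1} ∏ 1/(2n_j-1)`. -/
noncomputable def tstarharm : ℕ → ℕ → ℝ
  | 0, _ => 1
  | (k+1), n => ∑ j ∈ Finset.Icc 1 n, (1 / (2 * (j : ℝ) - 1)) * tstarharm k j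

/-- `tₙ(k) = ∑_{j=1}^n 1/(2j-1)^k`. -/
noncomputable def tpow (k n : ℕ) : ℝ := ∑ j ∈ Finset.Icc 1 n, 1 / (2 * (j : ℝ) - 1) ^ k

/-!
`tₙ⋆(1_m)` is the complete homogeneous symmetric polynomial `h_m` and `tₙ(k)` the power sum `p_k`,
both evaluated at `1, 1/3, …, 1/(2n-1)`; the recurrence is Newton's identity
`m h_m = ∑_{i<m} h_i p_{m-i}`. Adjoining a variable `y` gives `h'_{k+1} = h_{k+1} + y h'_k` and
`p'_k = p_k + y^k`, which lets one prove the identity by induction on the number of variables and,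
inside that, on `m`.
-/

lemma sum_range_succ_mul_pow_sub {R : Type*} [CommSemiring R] (a : ℕ → R) (y : R) (m : ℕ) :
    ∑ i ∈ range (m + 1), a i * y ^ (m + 1 - i) =
      y * (a m + ∑ i ∈ range m, a i * y ^ (m - i)) := by
  have hshift : ∀ i ∈ range (m + 1), a i * y ^ (m + 1 - i) = y * (a i * y ^ (m - i)) := by
    intro i hi
    rw [Nat.sub_add_comm (mem_range_succ_iff.mp hi), pow_succ]
    ring
  rw [sum_congr rfl hshift, ← mul_sum, sum_range_succ, Nat.sub_self, pow_zero, mul_one, add_comm]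

section Newton

variable {R : Type*} [CommRing R] (x : ℕ → R)

/-- `hsymmSeq x k n = h_k(x 1, …, x n)`. -/
def hsymmSeq : ℕ → ℕ → R
  | 0, _ => 1
  | k + 1, n => ∑ j ∈ Icc 1 n, x j * hsymmSeq k j

/-- `psumSeq x k n = p_k(x 1, …, x n)`. -/
def psumSeq (k n : ℕ) : R := ∑ j ∈ Icc 1 n, x j ^ k

@[simp]
lemma hsymmSeq_zero (n : ℕ) : hsymmSeq x 0 n = 1 := rfl

@[simp]
lemma hsymmSeq_succ_zero (k : ℕ) : hsymmSeq x (k + 1) 0 = 0 := by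
  simp [hsymmSeq]

lemma hsymmSeq_succ_succ (k n : ℕ) :
    hsymmSeq x (k + 1) (n + 1) = hsymmSeq x (k + 1) n + x (n + 1) * hsymmSeq x k (n + 1) := by
  simp only [hsymmSeq]
  rw [sum_Icc_succ_top (by omega)]

@[simp]
lemma psumSeq_zero_right (k : ℕ) : psumSeq x k 0 = 0 := by
  simp [psumSeq]

lemma psumSeq_succ (k n : ℕ) : psumSeq x k (n + 1) = psumSeq x k n + x (n + 1) ^ k := by
  rw [psumSeq, psumSeq, sum_Icc_succ_top (by omega)]

lemma sum_mul_psumSeq_succ (a : ℕ → R) (m n : ℕ) :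
    ∑ i ∈ range m, a i * psumSeq x (m - i) (n + 1) =
      ∑ i ∈ range m, a i * psumSeq x (m - i) n + ∑ i ∈ range m, a i * x (n + 1) ^ (m - i) := by
  simp only [psumSeq_succ, mul_add, sum_add_distrib]

lemma sum_hsymmSeq_succ_mul_psumSeq (m n : ℕ) :
    ∑ i ∈ range (m + 1), hsymmSeq x i (n + 1) * psumSeq x (m + 1 - i) n =
      ∑ i ∈ range (m + 1), hsymmSeq x i n * psumSeq x (m + 1 - i) n +
        x (n + 1) * ∑ i ∈ range m, hsymmSeq x i (n + 1) * psumSeq x (m - i) n := by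
  simp only [sum_range_succ' _ m, hsymmSeq_succ_succ, add_mul, sum_add_distrib, mul_sum,
    hsymmSeq_zero, Nat.add_sub_add_right, mul_assoc]
  ring

theorem natCast_mul_hsymmSeq (m n : ℕ) :
    (m : R) * hsymmSeq x m n = ∑ i ∈ range m, hsymmSeq x i n * psumSeq x (m - i) n := by
  induction n generalizing m with
  | zero => cases m <;> simp
  | succ n ihn =>
    induction m with
    | zero => simp
    | succ m ihm =>
      rw [sum_mul_psumSeq_succ] at ihm ⊢
      rw [sum_hsymmSeq_succ_mul_psumSeq, ← ihn, sum_range_succ_mul_pow_sub, hsymmSeq_succ_succ]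
      push_cast
      linear_combination x (n + 1) * ihm

end Newton

lemma tstarharm_eq_hsymmSeq (k n : ℕ) :
    tstarharm k n = hsymmSeq (fun j : ℕ ↦ 1 / (2 * (j : ℝ) - 1)) k n := by
  induction k generalizing n with
  | zero => rfl
  | succ k ih => simp only [tstarharm, hsymmSeq, ih]

lemma tpow_eq_psumSeq (k n : ℕ) :
    tpow k n = psumSeq (fun j : ℕ ↦ 1 / (2 * (j : ℝ) - 1)) k n := by
  simp only [tpow, psumSeq, div_pow, one_pow]

theorem tstarharm_recurrence_general (m n : ℕ) (hm : 1 ≤ m) :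
    tstarharm m n = (1 / (m : ℝ)) *
      ∑ i ∈ Finset.range m, tstarharm i n * tpow (m - i) n := by
  have hm' : (m : ℝ) ≠ 0 := by positivity
  simp only [tstarharm_eq_hsymmSeq, tpow_eq_psumSeq, ← natCast_mul_hsymmSeq]
  field_simp

theorem tstarharm_recurrence (m n : ℕ) (hm : 1 ≤ m) (hn : 1 ≤ n) :
    tstarharm m n = (1 / (m : ℝ)) *
      ∑ i ∈ Finset.range m, tstarharm i n * tpow (m - i) n :=
  tstarharm_recurrence_general m n hm
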